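/- arXiv:1512.02730 — 3 statements merged into one kernel-verified Lean document; each statement's English description precedes it below -/
import Mathlib

section
/- Let R and B be two disjoint finite nonempty sets of points in the plane such that R ∪ B is in general position. Then there exists a plane bichromatic tree on R ∪ B, i.e., the geometric complete bipartite graph K(R,B) contains a non-crossing spanning tree. -/
open scoped Classical

noncomputable section

/-- The plane. -/
abbrev Pt : Type := ℝ × ℝ

/-- A set of points is in general position if no three of its points are collinear. -/
def GenPos (P : Set Pt) : Prop :=
  ∀ p ∈ P, ∀ q ∈ P, ∀ r ∈ P, p ≠ q → p ≠ r → q ≠ r →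
    ¬ Collinear ℝ ({p, q, r} : Set Pt)

/-- Degree of a vertex in a simple graph. -/
def deg {V : Type*} (G : SimpleGraph V) (v : V) : ℕ := (G.neighborSet v).ncard

/-- `G` is a plane bichromatic spanning tree on `R ∪ B`: a spanning tree of the
geometric complete bipartite graph `K(R,B)` (every edge joins a point of `R` and a
point of `B`), drawn with straight-line segments, no two of which cross (any point
lying on two distinct closed edges is a common endpoint of both). -/
def PlaneBichromTree (R B : Finset Pt) (G : SimpleGraph {x : Pt // x ∈ R ∪ B}) : Prop :=
  G.IsTree ∧
  (∀ u v : {x : Pt // x ∈ R ∪ B}, G.Adj u v →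
      ((u.1 ∈ R ∧ v.1 ∈ B) ∨ (u.1 ∈ B ∧ v.1 ∈ R))) ∧
  (∀ u v x y : {x : Pt // x ∈ R ∪ B}, G.Adj u v → G.Adj x y →
      s(u, v) ≠ s(x, y) →
      ∀ p : Pt, p ∈ segment ℝ u.1 v.1 → p ∈ segment ℝ x.1 y.1 →
        (p = u.1 ∨ p = v.1) ∧ (p = x.1 ∨ p = y.1))

/-!
Choose a direction `(1, c)` in which the points of `R ∪ B` have pairwise distinct heights and let
`p₀` be the lowest point, say of colour `R`. All other points lie strictly above `p₀`, so the rays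
from `p₀` are ordered by slope. Join `p₀` to every point of `B`: these edges lie on distinct rays.
Join every other point `q` of `R` to the point of `B` whose ray is the last one before the ray of
`q`, or the first ray of `B` if there is none. The slopes along such an edge sweep no ray of `B`
other than the one of its endpoint in `B`, and the slope ranges of two such edges with different
endpoints in `B` are disjoint, so edges can only meet at common endpoints; edges with the same
endpoint in `B` meet only there by general position. The result is a tree of depth two rooted
at `p₀`.
-/

namespace PlaneBichromatic

open Set

lemma mul_add_mul_pos {a b x y : ℝ} (ha : 0 < a) (hb : 0 < b) (hx : 0 ≤ x) (hy : 0 ≤ y)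
    (hxy : x + y = 1) : 0 < x * a + y * b := by
  rcases hx.eq_or_lt with rfl | hx
  · simpa [show y = 1 by linarith] using hb
  · positivity

lemma div_mem_uIcc_div {a b m n x y : ℝ} (ha : 0 < a) (hb : 0 < b) (hx : 0 ≤ x) (hy : 0 ≤ y)
    (hxy : x + y = 1) : (x * m + y * n) / (x * a + y * b) ∈ uIcc (m / a) (n / b) := by
  rw [← segment_eq_uIcc, mem_segment_iff_div]
  refine ⟨x * a, y * b, by positivity, by positivity, mul_add_mul_pos ha hb hx hy hxy, ?_⟩
  have hd := (mul_add_mul_pos ha hb hx hy hxy).ne'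
  rw [smul_eq_mul, smul_eq_mul]
  field_simp

lemma eq_zero_of_div_eq_div {a b m n x y : ℝ} (ha : 0 < a) (hb : 0 < b) (hx : 0 ≤ x) (hy : 0 ≤ y)
    (hxy : x + y = 1) (hmn : m / a ≠ n / b) (h : (x * m + y * n) / (x * a + y * b) = n / b) :
    x = 0 := by
  have hd := (mul_add_mul_pos ha hb hx hy hxy).ne'
  rw [div_eq_div_iff hd hb.ne'] at h
  have : x * (m * b - n * a) = 0 := by linear_combination h
  refine (mul_eq_zero.1 this).resolve_right fun h' => hmn ?_
  rw [div_eq_div_iff ha.ne' hb.ne']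
  linarith

def dir (c : ℝ) (q : Pt) : ℝ := q.1 + c * q.2

def height (c : ℝ) (p₀ q : Pt) : ℝ := dir c q - dir c p₀

def offset (c : ℝ) (p₀ q : Pt) : ℝ := (q.2 - p₀.2) - c * (q.1 - p₀.1)

/-- The slope of `q - p₀` in the frame `(1, c)`, `(-c, 1)`. On the half-plane `0 < height c p₀ q`
it increases with the angle of the ray from `p₀` through `q`. -/
def slope (c : ℝ) (p₀ q : Pt) : ℝ := offset c p₀ q / height c p₀ q

section Slope

variable {c : ℝ} {p₀ p q w : Pt}

lemma height_self : height c p₀ p₀ = 0 := sub_self _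

lemma offset_self : offset c p₀ p₀ = 0 := by simp [offset]

lemma height_add_smul {x y : ℝ} (hxy : x + y = 1) :
    height c p₀ (x • q + y • w) = x * height c p₀ q + y * height c p₀ w := by
  simp only [height, dir, Prod.fst_add, Prod.snd_add, Prod.smul_fst, Prod.smul_snd, smul_eq_mul]
  linear_combination (p₀.1 + c * p₀.2) * hxy

lemma offset_add_smul {x y : ℝ} (hxy : x + y = 1) :
    offset c p₀ (x • q + y • w) = x * offset c p₀ q + y * offset c p₀ w := by
  simp only [offset, Prod.fst_add, Prod.snd_add, Prod.smul_fst, Prod.smul_snd, smul_eq_mul]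
  linear_combination (p₀.2 - c * p₀.1) * hxy

lemma slope_mem_uIcc_of_mem_segment (hq : 0 < height c p₀ q) (hw : 0 < height c p₀ w)
    (hp : p ∈ segment ℝ q w) :
    0 < height c p₀ p ∧ slope c p₀ p ∈ uIcc (slope c p₀ q) (slope c p₀ w) := by
  obtain ⟨x, y, hx, hy, hxy, rfl⟩ := hp
  rw [slope, slope, slope, height_add_smul hxy, offset_add_smul hxy]
  exact ⟨mul_add_mul_pos hq hw hx hy hxy, div_mem_uIcc_div hq hw hx hy hxy⟩

lemma eq_of_mem_segment_of_slope_eq (hq : 0 < height c p₀ q) (hw : 0 < height c p₀ w)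
    (hqw : slope c p₀ q ≠ slope c p₀ w) (hp : p ∈ segment ℝ q w)
    (h : slope c p₀ p = slope c p₀ w) : p = w := by
  obtain ⟨x, y, hx, hy, hxy, rfl⟩ := hp
  rw [slope, height_add_smul hxy, offset_add_smul hxy] at h
  obtain rfl := eq_zero_of_div_eq_div hq hw hx hy hxy hqw h
  simp [show y = 1 by linarith]

lemma slope_eq_of_mem_segment_apex (hp : p ∈ segment ℝ q p₀) (hne : p ≠ p₀) :
    slope c p₀ p = slope c p₀ q := by
  obtain ⟨x, y, hx, hy, hxy, rfl⟩ := hp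
  have hx0 : x ≠ 0 := by rintro rfl; simp [show y = 1 by linarith] at hne
  rw [slope, height_add_smul hxy, offset_add_smul hxy, height_self, offset_self]
  simp only [mul_zero, add_zero]
  exact mul_div_mul_left _ _ hx0

lemma collinear_of_slope_eq (hq : 0 < height c p₀ q) (hw : 0 < height c p₀ w)
    (h : slope c p₀ q = slope c p₀ w) : Collinear ℝ ({p₀, q, w} : Set Pt) := by
  rw [slope, slope, div_eq_div_iff hq.ne' hw.ne'] at h
  have hc : 1 + c ^ 2 ≠ 0 := by positivity
  -- `(1 + c²) • (w - p₀) = height w • (1, c) + offset w • (-c, 1)`, and likewise for `q`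
  have hw_mem : AffineMap.lineMap p₀ q (height c p₀ w / height c p₀ q) = w := by
    simp only [height, dir, offset] at h hq ⊢
    ext <;> simp only [AffineMap.lineMap_apply, vsub_eq_sub, vadd_eq_add, Prod.fst_add,
      Prod.snd_add, Prod.smul_fst, Prod.smul_snd, Prod.fst_sub, Prod.snd_sub, smul_eq_mul] <;>
      field_simp <;> apply mul_left_cancel₀ hc
    · linear_combination -c * h
    · linear_combination h
  rw [Set.pair_comm, Set.insert_comm]
  exact collinear_insert_of_mem_affineSpan_pair
    (hw_mem ▸ AffineMap.lineMap_mem_affineSpan_pair _ _ _)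

end Slope

lemma eq_of_mem_segment_of_mem_segment {E : Type*} [AddCommGroup E] [Module ℝ E] {q q' w p : E}
    (h : ¬ Collinear ℝ ({q, q', w} : Set E)) (hp : p ∈ segment ℝ q w)
    (hp' : p ∈ segment ℝ q' w) : p = w := by
  by_contra hpw
  have hq : q ∈ line[ℝ, p, w] :=
    (mem_segment_iff_wbtw.1 hp).collinear.mem_affineSpan_of_mem_of_ne (by simp) (by simp)
      (by simp) hpw
  have hq' : q' ∈ line[ℝ, p, w] :=
    (mem_segment_iff_wbtw.1 hp').collinear.mem_affineSpan_of_mem_of_ne (by simp) (by simp)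
      (by simp) hpw
  exact h ((collinear_insert_insert_of_mem_affineSpan_pair hq hq').subset
    (Set.insert_subset_insert (Set.insert_subset_insert (Set.subset_insert _ _))))

section ParentGraph

variable {V : Type*} (r : V) (par : V → V)

def parentGraph : SimpleGraph V := SimpleGraph.fromRel fun v w => v ≠ r ∧ par v = w

variable {r par}

lemma parentGraph_adj {v w : V} :
    (parentGraph r par).Adj v w ↔ v ≠ w ∧ ((v ≠ r ∧ par v = w) ∨ (w ≠ r ∧ par w = v)) :=
  SimpleGraph.fromRel_adj _ v w

lemma exists_eq_of_parentGraph_adj {u v : V} (h : (parentGraph r par).Adj u v) :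
    ∃ w, w ≠ r ∧ s(u, v) = s(w, par w) := by
  rcases (parentGraph_adj.1 h).2 with ⟨hu, rfl⟩ | ⟨hv, rfl⟩
  · exact ⟨u, hu, rfl⟩
  · exact ⟨v, hv, Sym2.eq_swap⟩

variable {rank : V → ℕ}

lemma parentGraph_adj_par (hrank : ∀ v, v ≠ r → rank (par v) < rank v) {v : V} (hv : v ≠ r) :
    (parentGraph r par).Adj v (par v) :=
  parentGraph_adj.2 ⟨fun h => (hrank v hv).ne (congrArg rank h.symm), .inl ⟨hv, rfl⟩⟩

lemma parentGraph_connected (hrank : ∀ v, v ≠ r → rank (par v) < rank v) :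
    (parentGraph r par).Connected := by
  have : Nonempty V := ⟨r⟩
  suffices h : ∀ v, (parentGraph r par).Reachable v r from
    .mk fun u v => (h u).trans (h v).symm
  intro v
  induction hn : rank v using Nat.strong_induction_on generalizing v with
  | _ n ih =>
    by_cases hv : v = r
    · exact hv ▸ .rfl
    · exact (parentGraph_adj_par hrank hv).reachable.trans (ih _ (hn ▸ hrank v hv) _ rfl)

lemma isTree_parentGraph [Finite V] (hrank : ∀ v, v ≠ r → rank (par v) < rank v) :
    (parentGraph r par).IsTree := by
  refine SimpleGraph.isTree_iff_connected_and_card.2 ⟨parentGraph_connected hrank, ?_⟩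
  let e : {v // v ≠ r} → (parentGraph r par).edgeSet := fun v =>
    ⟨s(v.1, par v.1), parentGraph_adj_par hrank v.2⟩
  have he : Function.Bijective e := by
    constructor
    · rintro ⟨v, hv⟩ ⟨w, hw⟩ h
      rcases Sym2.eq_iff.1 (congrArg Subtype.val h) with ⟨h, -⟩ | ⟨hvw, hwv⟩
      · exact Subtype.ext h
      · have h1 := hrank v hv
        have h2 := hrank w hw
        simp only at hvw hwv
        rw [hwv] at h1
        rw [← hvw] at h2
        omega
    · rintro ⟨e, he⟩
      induction e using Sym2.ind with
      | _ u v =>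
        obtain ⟨w, hw, h⟩ := exists_eq_of_parentGraph_adj he
        exact ⟨⟨w, hw⟩, Subtype.ext h.symm⟩
  rw [← Nat.card_congr (Equiv.ofBijective e he)]
  have := Fintype.ofFinite V
  have hV : 0 < Fintype.card V := Fintype.card_pos_iff.2 ⟨r⟩
  rw [Nat.card_eq_fintype_card, Nat.card_eq_fintype_card, Fintype.card_subtype_compl,
    Fintype.card_subtype_eq]
  omega

end ParentGraph

section PredOrMin

variable {α : Type*} [LinearOrder α] (S : Finset α) (hS : S.Nonempty)

def predOrMin (t : α) : α :=
  if h : (S.filter (· < t)).Nonempty then (S.filter (· < t)).max' h else S.min' hS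

variable {S hS}

lemma predOrMin_spec (t : α) :
    (predOrMin S hS t < t ∧ ∀ x ∈ S, x < t → x ≤ predOrMin S hS t) ∨
      ((∀ x ∈ S, t ≤ x) ∧ predOrMin S hS t = S.min' hS) := by
  unfold predOrMin
  split_ifs with h
  · refine .inl ⟨(Finset.mem_filter.1 (Finset.max'_mem _ h)).2, fun x hx hxt => ?_⟩
    exact Finset.le_max' _ x (Finset.mem_filter.2 ⟨hx, hxt⟩)
  · refine .inr ⟨fun x hx => ?_, rfl⟩
    by_contra! hxt
    exact h ⟨x, Finset.mem_filter.2 ⟨hx, hxt⟩⟩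

lemma predOrMin_mem (t : α) : predOrMin S hS t ∈ S := by
  unfold predOrMin
  split_ifs with h
  · exact (Finset.mem_filter.1 (Finset.max'_mem _ h)).1
  · exact Finset.min'_mem S hS

lemma eq_predOrMin_of_mem_uIcc {t x : α} (ht : t ∉ S) (hx : x ∈ S)
    (hxt : x ∈ uIcc t (predOrMin S hS t)) : x = predOrMin S hS t := by
  have hne : x ≠ t := fun h => ht (h ▸ hx)
  rcases predOrMin_spec (hS := hS) t with ⟨hlt, hmax⟩ | ⟨hmin, heq⟩
  · rw [uIcc_of_ge hlt.le] at hxt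
    exact le_antisymm (hmax x hx (lt_of_le_of_ne hxt.2 hne)) hxt.1
  · rw [uIcc_of_le (heq ▸ hmin _ (S.min'_mem hS))] at hxt
    exact le_antisymm hxt.2 (heq ▸ S.min'_le x hx)

lemma disjoint_uIcc_predOrMin {t t' : α} (ht : t ∉ S) (ht' : t' ∉ S)
    (hne : predOrMin S hS t ≠ predOrMin S hS t') :
    Disjoint (uIcc t (predOrMin S hS t)) (uIcc t' (predOrMin S hS t')) := by
  wlog htt' : t < t' generalizing t t'
  · have htt : t ≠ t' := by rintro rfl; exact hne rfl
    exact (this ht' ht hne.symm (lt_of_le_of_ne (not_lt.1 htt') htt.symm)).symm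
  have hs := predOrMin_spec (hS := hS) t
  have hs' := predOrMin_spec (hS := hS) t'
  set a := predOrMin S hS t
  set a' := predOrMin S hS t'
  have ha : a ∈ S := predOrMin_mem t
  have ha' : a' ∈ S := predOrMin_mem t'
  rw [Set.disjoint_iff]
  rintro x ⟨hx, hx'⟩
  rcases hs with ⟨hlt, hmax⟩ | ⟨hmin, heq⟩ <;> rcases hs' with ⟨hlt', hmax'⟩ | ⟨hmin', heq'⟩
  · have haa' : a < a' := lt_of_le_of_ne (hmax' a ha (hlt.trans htt')) hne
    have hta' : t < a' := lt_of_le_of_ne (not_lt.1 fun h => (hmax a' ha' h).not_gt haa')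
      fun h => ht (h ▸ ha')
    rw [uIcc_of_ge hlt.le] at hx
    rw [uIcc_of_ge hlt'.le] at hx'
    exact (hx.2.trans_lt hta').not_ge hx'.1
  · exact absurd (hmin' a ha) (not_le.2 (hlt.trans htt'))
  · have haa' : a < a' := lt_of_le_of_ne (by rw [heq]; exact S.min'_le a' ha') hne
    rw [uIcc_of_le (by rw [heq]; exact hmin _ (S.min'_mem hS))] at hx
    rw [uIcc_of_ge hlt'.le] at hx'
    exact (hx.2.trans_lt haa').not_ge hx'.1
  · exact hne (heq.trans heq'.symm)

end PredOrMin

def MeetOnlyAtEndpoints (a b c d : Pt) : Prop :=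
  ∀ p ∈ segment ℝ a b, p ∈ segment ℝ c d → (p = a ∨ p = b) ∧ (p = c ∨ p = d)

namespace MeetOnlyAtEndpoints

variable {a b c d : Pt}

lemma symm (h : MeetOnlyAtEndpoints a b c d) : MeetOnlyAtEndpoints c d a b :=
  fun p hp hp' => (h p hp' hp).symm

lemma swap_left (h : MeetOnlyAtEndpoints a b c d) : MeetOnlyAtEndpoints b a c d :=
  fun p hp hp' => (h p (segment_symm ℝ b a ▸ hp) hp').imp_left Or.symm

lemma swap_right (h : MeetOnlyAtEndpoints a b c d) : MeetOnlyAtEndpoints a b d c :=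
  h.symm.swap_left.symm

end MeetOnlyAtEndpoints

def IsPlane {P : Finset Pt} (G : SimpleGraph {x : Pt // x ∈ P}) : Prop :=
  ∀ u v x y : {x : Pt // x ∈ P}, G.Adj u v → G.Adj x y → s(u, v) ≠ s(x, y) →
    MeetOnlyAtEndpoints u.1 v.1 x.1 y.1

lemma meetOnlyAtEndpoints_of_sym2_eq {P : Finset Pt} {u v x y a b a' b' : {x : Pt // x ∈ P}}
    (h : MeetOnlyAtEndpoints a.1 b.1 a'.1 b'.1) (hab : s(u, v) = s(a, b))
    (hab' : s(x, y) = s(a', b')) : MeetOnlyAtEndpoints u.1 v.1 x.1 y.1 := by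
  rcases Sym2.eq_iff.1 hab with ⟨rfl, rfl⟩ | ⟨rfl, rfl⟩ <;>
    rcases Sym2.eq_iff.1 hab' with ⟨rfl, rfl⟩ | ⟨rfl, rfl⟩
  exacts [h, h.swap_right, h.swap_left, h.swap_left.swap_right]

lemma isPlane_parentGraph {P : Finset Pt} {r : {x : Pt // x ∈ P}} {par : _ → _}
    (h : ∀ w w', w ≠ r → w' ≠ r → w ≠ w' → MeetOnlyAtEndpoints w.1 (par w).1 w'.1 (par w').1) :
    IsPlane (parentGraph r par) := by
  intro u v x y huv hxy hne
  obtain ⟨w, hw, huw⟩ := exists_eq_of_parentGraph_adj huv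
  obtain ⟨w', hw', hxw'⟩ := exists_eq_of_parentGraph_adj hxy
  refine meetOnlyAtEndpoints_of_sym2_eq (h w w' hw hw' ?_) huw hxw'
  rintro rfl
  exact hne (huw.trans hxw'.symm)

section Fan

variable {c : ℝ} {p₀ : Pt}

lemma meetOnlyAtEndpoints_apex {b b' : Pt} (h : slope c p₀ b ≠ slope c p₀ b') :
    MeetOnlyAtEndpoints b p₀ b' p₀ := by
  intro p hp hp'
  by_cases hp₀ : p = p₀
  · exact ⟨.inr hp₀, .inr hp₀⟩
  · exact absurd ((slope_eq_of_mem_segment_apex hp hp₀).symm.trans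
      (slope_eq_of_mem_segment_apex hp' hp₀)) h

lemma meetOnlyAtEndpoints_apex_of_slope {b w a : Pt} (hw : 0 < height c p₀ w)
    (ha : 0 < height c p₀ a) (hwa : slope c p₀ w ≠ slope c p₀ a)
    (hb : slope c p₀ b ∈ uIcc (slope c p₀ w) (slope c p₀ a) → b = a) :
    MeetOnlyAtEndpoints b p₀ w a := by
  intro p hp hp'
  obtain ⟨hpos, hslope⟩ := slope_mem_uIcc_of_mem_segment hw ha hp'
  have hp₀ : p ≠ p₀ := by rintro rfl; exact hpos.ne' height_self
  have hpb : slope c p₀ p = slope c p₀ b := slope_eq_of_mem_segment_apex hp hp₀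
  obtain rfl := hb (hpb ▸ hslope)
  have hpa := eq_of_mem_segment_of_slope_eq hw ha hwa hp' hpb
  exact ⟨.inl hpa, .inr hpa⟩

lemma meetOnlyAtEndpoints_of_disjoint {w a w' a' : Pt} (hw : 0 < height c p₀ w)
    (ha : 0 < height c p₀ a) (hw' : 0 < height c p₀ w') (ha' : 0 < height c p₀ a')
    (h : Disjoint (uIcc (slope c p₀ w) (slope c p₀ a)) (uIcc (slope c p₀ w') (slope c p₀ a'))) :
    MeetOnlyAtEndpoints w a w' a' := fun _ hp hp' =>
  (disjoint_left.1 h (slope_mem_uIcc_of_mem_segment hw ha hp).2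
    (slope_mem_uIcc_of_mem_segment hw' ha' hp').2).elim

lemma injOn_slope {P : Finset Pt} (hgp : GenPos (P : Set Pt)) (hp₀ : p₀ ∈ P)
    (hheight : ∀ q ∈ P, q ≠ p₀ → 0 < height c p₀ q) :
    InjOn (slope c p₀) (↑P \ {p₀}) := by
  rintro q ⟨hq, hqp₀ : q ≠ p₀⟩ w ⟨hw, hwp₀ : w ≠ p₀⟩ h
  by_contra hqw
  exact hgp p₀ hp₀ q hq w hw (Ne.symm hqp₀) (Ne.symm hwp₀) hqw
    (collinear_of_slope_eq (hheight q hq hqp₀) (hheight w hw hwp₀) h)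

end Fan

/-- `p₀` is the apex and `O` the colour class not containing it; `pa q` is the point of `O` that
`q` is joined to, and matters only for `q ∉ O`. -/
structure FanConfig (c : ℝ) (P O : Finset Pt) (p₀ : Pt) (pa : Pt → Pt) : Prop where
  subset : O ⊆ P
  nonempty : O.Nonempty
  apex_mem : p₀ ∈ P
  apex_notMem : p₀ ∉ O
  genPos : GenPos (P : Set Pt)
  height_pos : ∀ q ∈ P, q ≠ p₀ → 0 < height c p₀ q
  attach_mem : ∀ q, pa q ∈ O
  slope_attach : ∀ q, slope c p₀ (pa q) =
    predOrMin (O.image (slope c p₀)) (nonempty.image _) (slope c p₀ q)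

namespace FanConfig

variable {c : ℝ} {P O : Finset Pt} {p₀ : Pt} {pa : Pt → Pt} {b w w' : Pt}

lemma ne_apex_of_mem (F : FanConfig c P O p₀ pa) (hb : b ∈ O) : b ≠ p₀ :=
  fun h => F.apex_notMem (h ▸ hb)

lemma height_pos_of_mem (F : FanConfig c P O p₀ pa) (hb : b ∈ O) : 0 < height c p₀ b :=
  F.height_pos b (F.subset hb) (F.ne_apex_of_mem hb)

lemma slope_injective (F : FanConfig c P O p₀ pa) (hw : w ∈ P) (hw₀ : w ≠ p₀) (hw' : w' ∈ P)
    (hw'₀ : w' ≠ p₀) (h : slope c p₀ w = slope c p₀ w') : w = w' :=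
  injOn_slope F.genPos F.apex_mem F.height_pos ⟨hw, hw₀⟩ ⟨hw', hw'₀⟩ h

lemma slope_notMem_image (F : FanConfig c P O p₀ pa) (hw : w ∈ P) (hwO : w ∉ O)
    (hw₀ : w ≠ p₀) : slope c p₀ w ∉ O.image (slope c p₀) := by
  rw [Finset.mem_image]
  rintro ⟨b, hb, h⟩
  exact hwO (F.slope_injective (F.subset hb) (F.ne_apex_of_mem hb) hw hw₀ h ▸ hb)

lemma meetOnlyAtEndpoints_star_attach (F : FanConfig c P O p₀ pa) (hb : b ∈ O) (hw : w ∈ P)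
    (hwO : w ∉ O) (hw₀ : w ≠ p₀) : MeetOnlyAtEndpoints b p₀ w (pa w) := by
  have ha := F.attach_mem w
  refine meetOnlyAtEndpoints_apex_of_slope (F.height_pos w hw hw₀) (F.height_pos_of_mem ha)
    (fun h => hwO (F.slope_injective hw hw₀ (F.subset ha) (F.ne_apex_of_mem ha) h ▸ ha))
    fun hbw => ?_
  rw [F.slope_attach] at hbw
  have hb_eq := eq_predOrMin_of_mem_uIcc (F.slope_notMem_image hw hwO hw₀)
    (Finset.mem_image_of_mem _ hb) hbw
  exact F.slope_injective (F.subset hb) (F.ne_apex_of_mem hb) (F.subset ha)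
    (F.ne_apex_of_mem ha) (hb_eq.trans (F.slope_attach w).symm)

lemma meetOnlyAtEndpoints_attach (F : FanConfig c P O p₀ pa) (hw : w ∈ P) (hwO : w ∉ O)
    (hw₀ : w ≠ p₀) (hw' : w' ∈ P) (hw'O : w' ∉ O) (hw'₀ : w' ≠ p₀) (hne : w ≠ w') :
    MeetOnlyAtEndpoints w (pa w) w' (pa w') := by
  have ha := F.attach_mem w
  have ha' := F.attach_mem w'
  by_cases hpa : pa w = pa w'
  · rw [← hpa]
    intro p hp hp'
    have hncol := F.genPos w hw w' hw' (pa w) (F.subset ha) hne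
      (fun h => hwO (h ▸ ha)) (fun h => hw'O (h ▸ ha))
    have hpa := eq_of_mem_segment_of_mem_segment hncol hp hp'
    exact ⟨.inr hpa, .inr hpa⟩
  refine meetOnlyAtEndpoints_of_disjoint (F.height_pos w hw hw₀) (F.height_pos_of_mem ha)
    (F.height_pos w' hw' hw'₀) (F.height_pos_of_mem ha') ?_
  rw [F.slope_attach, F.slope_attach]
  refine disjoint_uIcc_predOrMin (F.slope_notMem_image hw hwO hw₀)
    (F.slope_notMem_image hw' hw'O hw'₀) fun h => hpa ?_
  rw [← F.slope_attach, ← F.slope_attach] at h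
  exact F.slope_injective (F.subset ha) (F.ne_apex_of_mem ha) (F.subset ha')
    (F.ne_apex_of_mem ha') h

def root (F : FanConfig c P O p₀ pa) : {x : Pt // x ∈ P} := ⟨p₀, F.apex_mem⟩

def parent (F : FanConfig c P O p₀ pa) (v : {x : Pt // x ∈ P}) : {x : Pt // x ∈ P} :=
  if v.1 ∈ O then F.root else ⟨pa v.1, F.subset (F.attach_mem v.1)⟩

lemma parent_val_of_mem (F : FanConfig c P O p₀ pa) {v : {x : Pt // x ∈ P}} (hv : v.1 ∈ O) :
    (F.parent v).1 = p₀ := by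
  simp [parent, hv, root]

lemma parent_val_of_notMem (F : FanConfig c P O p₀ pa) {v : {x : Pt // x ∈ P}} (hv : v.1 ∉ O) :
    (F.parent v).1 = pa v.1 := by
  simp [parent, hv]

lemma ne_root_iff (F : FanConfig c P O p₀ pa) {v : {x : Pt // x ∈ P}} : v ≠ F.root ↔ v.1 ≠ p₀ :=
  Subtype.ext_iff.not

lemma parent_mem_iff (F : FanConfig c P O p₀ pa) (v : {x : Pt // x ∈ P}) :
    (F.parent v).1 ∈ O ↔ v.1 ∉ O := by
  by_cases hv : v.1 ∈ O
  · simp [F.parent_val_of_mem hv, F.apex_notMem, hv]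
  · simp [F.parent_val_of_notMem hv, F.attach_mem, hv]

def depth (p₀ : Pt) (O : Finset Pt) (q : Pt) : ℕ := if q = p₀ then 0 else if q ∈ O then 1 else 2

lemma depth_parent_lt (F : FanConfig c P O p₀ pa) (v : {x : Pt // x ∈ P}) (hv : v ≠ F.root) :
    depth p₀ O (F.parent v).1 < depth p₀ O v.1 := by
  rw [F.ne_root_iff] at hv
  by_cases hvO : v.1 ∈ O
  · simp [depth, F.parent_val_of_mem hvO, hv, hvO]
  · simp [depth, F.parent_val_of_notMem hvO, hv, hvO, F.attach_mem,
      F.ne_apex_of_mem (F.attach_mem _)]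

lemma meetOnlyAtEndpoints_parent (F : FanConfig c P O p₀ pa) (w w' : {x : Pt // x ∈ P})
    (hw : w ≠ F.root) (hw' : w' ≠ F.root) (hne : w ≠ w') :
    MeetOnlyAtEndpoints w.1 (F.parent w).1 w'.1 (F.parent w').1 := by
  rw [F.ne_root_iff] at hw hw'
  have hne' : w.1 ≠ w'.1 := Subtype.val_injective.ne hne
  by_cases hwO : w.1 ∈ O <;> by_cases hw'O : w'.1 ∈ O
  · rw [F.parent_val_of_mem hwO, F.parent_val_of_mem hw'O]
    exact meetOnlyAtEndpoints_apex fun h => hne' (F.slope_injective w.2 hw w'.2 hw' h)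
  · rw [F.parent_val_of_mem hwO, F.parent_val_of_notMem hw'O]
    exact F.meetOnlyAtEndpoints_star_attach hwO w'.2 hw'O hw'
  · rw [F.parent_val_of_notMem hwO, F.parent_val_of_mem hw'O]
    exact (F.meetOnlyAtEndpoints_star_attach hw'O w.2 hwO hw).symm
  · rw [F.parent_val_of_notMem hwO, F.parent_val_of_notMem hw'O]
    exact F.meetOnlyAtEndpoints_attach w.2 hwO hw w'.2 hw'O hw' hne'

theorem exists_plane_tree (F : FanConfig c P O p₀ pa) :
    ∃ G : SimpleGraph {x : Pt // x ∈ P},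
      G.IsTree ∧ (∀ u v, G.Adj u v → (u.1 ∈ O ↔ v.1 ∉ O)) ∧ IsPlane G := by
  refine ⟨parentGraph F.root F.parent,
    isTree_parentGraph (rank := fun v => depth p₀ O v.1) F.depth_parent_lt, fun u v huv => ?_,
    isPlane_parentGraph F.meetOnlyAtEndpoints_parent⟩
  obtain ⟨w, -, huw⟩ := exists_eq_of_parentGraph_adj huv
  rcases Sym2.eq_iff.1 huw with ⟨rfl, rfl⟩ | ⟨rfl, rfl⟩
  · rw [F.parent_mem_iff, not_not]
  · exact F.parent_mem_iff _

end FanConfig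

lemma exists_injOn_dir (P : Finset Pt) : ∃ c, InjOn (dir c) P := by
  obtain ⟨c, hc⟩ := Infinite.exists_notMem_finset
    ((P ×ˢ P).image fun x : Pt × Pt => (x.2.1 - x.1.1) / (x.1.2 - x.2.2))
  refine ⟨c, fun p hp q hq h => ?_⟩
  simp only [dir] at h
  by_cases h2 : p.2 = q.2
  · exact Prod.ext (by rw [h2] at h; linarith) h2
  · refine absurd (Finset.mem_image.2 ⟨(p, q), Finset.mem_product.2 ⟨hp, hq⟩, ?_⟩) hc
    rw [div_eq_iff (sub_ne_zero.2 h2)]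
    linarith

lemma exists_fanConfig {c : ℝ} {P O : Finset Pt} {p₀ : Pt} (hOP : O ⊆ P) (hO : O.Nonempty)
    (hp₀ : p₀ ∈ P) (hp₀O : p₀ ∉ O) (hgp : GenPos (P : Set Pt)) (hc : InjOn (dir c) P)
    (hmin : ∀ q ∈ P, dir c p₀ ≤ dir c q) : ∃ pa, FanConfig c P O p₀ pa := by
  choose pa hpa hslope using fun q =>
    Finset.mem_image.1 (predOrMin_mem (hS := hO.image (slope c p₀)) (slope c p₀ q))
  refine ⟨pa, hOP, hO, hp₀, hp₀O, hgp, fun q hq hne => ?_, hpa, hslope⟩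
  exact sub_pos.2 ((hmin q hq).lt_of_ne fun h => hne (hc hq hp₀ h.symm))

lemma bichromatic_of_iff {R B O : Finset Pt} (hdisj : Disjoint R B) (hO : O = R ∨ O = B)
    {u v : Pt} (hu : u ∈ R ∪ B) (hv : v ∈ R ∪ B) (h : u ∈ O ↔ v ∉ O) :
    (u ∈ R ∧ v ∈ B) ∨ (u ∈ B ∧ v ∈ R) := by
  have hRB := Finset.disjoint_left.1 hdisj
  rw [Finset.mem_union] at hu hv
  rcases hO with rfl | rfl <;> tauto

end PlaneBichromatic

open PlaneBichromatic

/-- For disjoint finite nonempty point sets `R`, `B` with `R ∪ B`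
in general position, there exists a plane bichromatic tree on `R ∪ B`. -/
theorem statement_8 (R B : Finset Pt) (hdisj : Disjoint R B)
    (hR : R.Nonempty) (hB : B.Nonempty) (hgp : GenPos (↑(R ∪ B) : Set Pt)) :
    ∃ G : SimpleGraph {x : Pt // x ∈ R ∪ B}, PlaneBichromTree R B G := by
  obtain ⟨c, hc⟩ := exists_injOn_dir (R ∪ B)
  obtain ⟨p₀, hp₀, hmin⟩ := (R ∪ B).exists_min_image (dir c) (hR.mono Finset.subset_union_left)
  obtain ⟨O, hO, hp₀O⟩ : ∃ O, (O = R ∨ O = B) ∧ p₀ ∉ O := by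
    by_cases h : p₀ ∈ R
    · exact ⟨B, .inr rfl, Finset.disjoint_left.1 hdisj h⟩
    · exact ⟨R, .inl rfl, h⟩
  have hOP : O ⊆ R ∪ B := by
    rcases hO with rfl | rfl
    exacts [Finset.subset_union_left, Finset.subset_union_right]
  have hOne : O.Nonempty := by rcases hO with rfl | rfl <;> assumption
  obtain ⟨pa, F⟩ := exists_fanConfig hOP hOne hp₀ hp₀O hgp hc hmin
  obtain ⟨G, htree, hcolor, hplane⟩ := F.exists_plane_tree
  exact ⟨G, htree, fun u v huv => bichromatic_of_iff hdisj hO u.2 v.2 (hcolor u v huv), hplane⟩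
end
end

section
/- Let R and B be two disjoint finite sets and k ≥ 1 an integer such that 1 ≤ |B| ≤ |R| ≤ k|B| + 1. Then the complete bipartite graph with parts R and B has a spanning tree whose maximum vertex degree is at most k + 1. -/
open scoped Classical

noncomputable section

namespace SimpleGraph

variable {V : Type*}

def parentGraph (p : V → V) : SimpleGraph V := fromRel fun u v ↦ p u = v

section parentGraph

variable {p : V → V} {u v : V}

theorem parentGraph_adj : (parentGraph p).Adj u v ↔ u ≠ v ∧ (p u = v ∨ p v = u) :=
  fromRel_adj ..

theorem parentGraph_le {H : SimpleGraph V} (h : ∀ v, p v ≠ v → H.Adj v (p v)) :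
    parentGraph p ≤ H := by
  rintro u v ⟨huv, rfl | rfl⟩
  · exact h u huv.symm
  · exact (h v huv).symm

theorem neighborSet_parentGraph (v : V) :
    (parentGraph p).neighborSet v = insert (p v) (p ⁻¹' {v}) \ {v} := by
  ext w
  simp only [mem_neighborSet, parentGraph_adj, Set.mem_sdiff, Set.mem_insert_iff,
    Set.mem_preimage, Set.mem_singleton_iff]
  grind

theorem deg_parentGraph_le (v : V) :
    deg (parentGraph p) v ≤ (p ⁻¹' {v} \ {v}).ncard + if p v = v then 0 else 1 := by
  rw [deg, neighborSet_parentGraph]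
  split_ifs with hv
  · rw [Set.insert_sdiff_of_mem _ (Set.mem_singleton_iff.2 hv), add_zero]
  · rw [Set.insert_sdiff_of_notMem _ (show p v ∉ ({v} : Set V) from hv)]
    exact Set.ncard_insert_le _ _

variable {root : V} {height : V → ℕ} (hheight : ∀ v ≠ root, height (p v) < height v)
include hheight

theorem parentGraph_adj_parent (hv : v ≠ root) : (parentGraph p).Adj v (p v) :=
  parentGraph_adj.2 ⟨fun h ↦ (hheight v hv).ne (congrArg height h).symm, .inl rfl⟩

theorem parentGraph_reachable_root (v : V) : (parentGraph p).Reachable v root := by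
  induction v using (measure height).wf.induction with
  | h v ih =>
    by_cases hv : v = root
    · exact hv ▸ .rfl
    · exact (parentGraph_adj_parent hheight hv).reachable.trans (ih _ (hheight v hv))

theorem isTree_parentGraph [Finite V] (hroot : p root = root) : (parentGraph p).IsTree := by
  rw [isTree_iff_connected_and_card]
  have : Nonempty V := ⟨root⟩
  refine ⟨⟨fun u v ↦ (parentGraph_reachable_root hheight u).trans
    (parentGraph_reachable_root hheight v).symm⟩, ?_⟩
  -- a connected graph with `|V| - 1` edges: each edge is `s(v, p v)` for exactly one `v ≠ root`
  let toEdge : {v // v ≠ root} → (parentGraph p).edgeSet :=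
    fun v ↦ ⟨s(v, p v), parentGraph_adj_parent hheight v.2⟩
  have hbij : toEdge.Bijective := by
    constructor
    · rintro ⟨u, hu⟩ ⟨v, hv⟩ huv
      obtain ⟨rfl, -⟩ | ⟨huv, hvu⟩ := Sym2.eq_iff.1 (congrArg Subtype.val huv)
      · rfl
      · dsimp only at huv hvu
        exact absurd (huv ▸ hheight v hv) (hvu ▸ hheight u hu).not_gt
    · rintro ⟨e, he⟩
      induction e using Sym2.ind with
      | h a b =>
        obtain ⟨hab, rfl | rfl⟩ := parentGraph_adj.1 ((mem_edgeSet _).1 he)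
        · exact ⟨⟨a, fun ha ↦ hab (by rw [ha, hroot])⟩, rfl⟩
        · exact ⟨⟨b, fun hb ↦ hab (by rw [hb, hroot])⟩, Subtype.ext Sym2.eq_swap⟩
  rw [← Nat.card_congr (Equiv.ofBijective toEdge hbij), ← Finite.card_option,
    Nat.card_congr (Equiv.optionSubtypeNe root)]

end parentGraph


-- Red `j < m` is the spine vertex after `bⱼ`; the leaves `m, …, m + k - 1` go to `b₀`
-- (`j - m - 1` truncates to `0` at `j = m`) and the following blocks of `k - 1` to `b₁, b₂, …`.
def redParent (k m j : ℕ) : ℕ := if j < m then j else (j - m - 1) / (k - 1)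

theorem redParent_of_lt {k m j : ℕ} (hj : j < m) : redParent k m j = j := if_pos hj

theorem redParent_lt {k m n j : ℕ} (hm : 0 < m) (hj : j < n) (hn : n ≤ k * m + 1) :
    redParent k m j < m := by
  unfold redParent
  split_ifs with hjm
  · exact hjm
  obtain hk | hk := Nat.lt_or_ge k 2
  · interval_cases k <;> simp_all
  · have hkm : k * m = (k - 1) * m + m := by
      obtain ⟨k, rfl⟩ := Nat.exists_eq_add_of_le' (by omega : 1 ≤ k)
      simp [add_mul]
    have hpos : 0 < (k - 1) * m := Nat.mul_pos (by omega) hm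
    rw [Nat.div_lt_iff_lt_mul (by omega), mul_comm]
    omega

theorem ncard_redParent_fiber_le {k m n : ℕ} (hk : 1 ≤ k) (hn : n ≤ k * m + 1) (i : ℕ) :
    {j : Fin n | redParent k m j = i}.ncard ≤ if i = 0 then k + 1 else k := by
  obtain ⟨a, c, hc, hsub⟩ : ∃ a c, c + 1 ≤ (if i = 0 then k + 1 else k) ∧
      ∀ j < n, redParent k m j = i → j ∈ insert i (Finset.Ico a (a + c)) := by
    simp only [redParent, Finset.mem_insert, Finset.mem_Ico]
    by_cases hi : i = 0
    · refine ⟨m, k, by simp [hi], fun j hj hji ↦ ?_⟩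
      split_ifs at hji with hjm
      · exact .inl hji
      obtain hk1 | hjk := Nat.div_eq_zero_iff.1 (hji.trans hi)
      · obtain rfl : k = 1 := by omega
        omega
      · omega
    · refine ⟨m + 1 + i * (k - 1), k - 1, by simp [hi]; omega, fun j hj hji ↦ ?_⟩
      split_ifs at hji with hjm
      · exact .inl hji
      have hk1 : 0 < k - 1 := Nat.pos_of_ne_zero fun h ↦ hi (by simp [← hji, h])
      have hpos : 0 < i * (k - 1) := Nat.mul_pos (Nat.pos_of_ne_zero hi) hk1
      have := (Nat.div_eq_iff hk1).1 hji
      omega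
  calc {j : Fin n | redParent k m j = i}.ncard
      = (Fin.val '' {j : Fin n | redParent k m j = i}).ncard :=
        (Set.ncard_image_of_injective _ Fin.val_injective).symm
    _ ≤ (insert i (Finset.Ico a (a + c))).card := by
        rw [← Set.ncard_coe_finset]
        refine Set.ncard_le_ncard ?_ (Finset.finite_toSet _)
        rintro _ ⟨j, hj, rfl⟩
        exact hsub j j.2 hj
    _ ≤ c + 1 := by grw [Finset.card_insert_le, Nat.card_Ico, Nat.add_sub_cancel_left]
    _ ≤ _ := hc

def caterpillarParent (k : ℕ) {m n : ℕ} (hm : 0 < m) (hmn : m ≤ n) (hn : n ≤ k * m + 1) :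
    Fin n ⊕ Fin m → Fin n ⊕ Fin m
  | .inl j => .inr ⟨redParent k m j, redParent_lt hm j.2 hn⟩
  | .inr ⟨0, h⟩ => .inr ⟨0, h⟩
  | .inr ⟨i + 1, h⟩ => .inl ⟨i, by omega⟩

section caterpillar

variable {k m n : ℕ} (hm : 0 < m) (hmn : m ≤ n) (hn : n ≤ k * m + 1)

theorem isTree_parentGraph_caterpillarParent :
    (parentGraph (caterpillarParent k hm hmn hn)).IsTree := by
  refine isTree_parentGraph (root := .inr ⟨0, hm⟩)
    (height := Sum.elim (fun j ↦ 2 * redParent k m j + 1) (fun i ↦ 2 * i)) ?_ rfl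
  rintro (j | ⟨_ | i, hi⟩) hv
  · simp [caterpillarParent]
  · exact absurd rfl hv
  · simp [caterpillarParent, redParent_of_lt (by omega : i < m)]
    omega

theorem parentGraph_caterpillarParent_le :
    parentGraph (caterpillarParent k hm hmn hn) ≤ completeBipartiteGraph (Fin n) (Fin m) :=
  parentGraph_le <| by rintro (j | ⟨_ | i, hi⟩) hv <;> simp_all [caterpillarParent]

theorem deg_parentGraph_caterpillarParent_le (hk : 1 ≤ k) (v : Fin n ⊕ Fin m) :
    deg (parentGraph (caterpillarParent k hm hmn hn)) v ≤ k + 1 := by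
  set p := caterpillarParent k hm hmn hn
  refine (deg_parentGraph_le v).trans ?_
  rcases v with j | i
  · have hchild : (p ⁻¹' {.inl j} \ {.inl j}).ncard ≤ 1 := by
      refine (Set.ncard_le_ncard Set.sdiff_subset).trans
        ((Set.ncard_le_one (Set.toFinite _)).2 ?_)
      rintro (_ | ⟨_ | a, ha⟩) hpa (_ | ⟨_ | b, hb⟩) hpb <;>
        simp_all [p, caterpillarParent, Fin.ext_iff]
    have hpj : p (.inl j) ≠ .inl j := by simp [p, caterpillarParent]
    rw [if_neg hpj]
    omega
  · have hchild : p ⁻¹' {.inr i} \ {.inr i} ⊆ Sum.inl '' {j | redParent k m j = i} := by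
      rintro (j | ⟨_ | a, ha⟩) ⟨hp, hne⟩
      · exact ⟨j, by simpa [p, caterpillarParent, Fin.ext_iff] using hp, rfl⟩
      all_goals simp_all [p, caterpillarParent]
    have hfiber := ((Set.ncard_le_ncard hchild).trans_eq
      (Set.ncard_image_of_injective _ Sum.inl_injective)).trans
      (ncard_redParent_fiber_le hk hn i)
    rcases i with ⟨_ | i, hi⟩ <;> simp_all [p, caterpillarParent]

end caterpillar

theorem Iso.deg_apply {W : Type*} {G : SimpleGraph V} {G' : SimpleGraph W} (f : G ≃g G')
    (v : V) : deg G' (f v) = deg G v := by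
  rw [deg, deg, ← f.image_neighborSet, Set.ncard_image_of_injective _ f.injective]

theorem Iso.exists_isTree_le_deg_le {W : Type*} {H : SimpleGraph V} {H' : SimpleGraph W}
    (f : H ≃g H') {d : ℕ} (h : ∃ T ≤ H, T.IsTree ∧ ∀ v, deg T v ≤ d) :
    ∃ T ≤ H', T.IsTree ∧ ∀ v, deg T v ≤ d := by
  obtain ⟨T, hle, htree, hdeg⟩ := h
  let g := Iso.map f.toEquiv T
  refine ⟨T.map f.toEmbedding, fun u v huv ↦ ?_, g.isTree_iff.1 htree, fun v ↦ ?_⟩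
  · obtain ⟨a, b, hab, rfl, rfl⟩ := (map_adj _ _ _ _).1 huv
    exact f.map_adj_iff.2 (hle hab)
  · obtain ⟨w, rfl⟩ := f.surjective v
    exact (g.deg_apply w).trans_le (hdeg w)

theorem exists_isTree_le_completeBipartiteGraph {X Y : Type*} [Finite X] [Finite Y] {k : ℕ}
    (hk : 1 ≤ k) (hY : 0 < Nat.card Y) (hYX : Nat.card Y ≤ Nat.card X)
    (hX : Nat.card X ≤ k * Nat.card Y + 1) :
    ∃ T ≤ completeBipartiteGraph X Y, T.IsTree ∧ ∀ v, deg T v ≤ k + 1 :=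
  (completeBipartiteGraphCongr (Finite.equivFin X).symm (Finite.equivFin Y).symm
    ).exists_isTree_le_deg_le ⟨_, parentGraph_caterpillarParent_le hY hYX hX,
      isTree_parentGraph_caterpillarParent hY hYX hX,
      deg_parentGraph_caterpillarParent_le hY hYX hX hk⟩

end SimpleGraph

open SimpleGraph in
/-- If `R` and `B` are disjoint finite sets with
`1 ≤ |B| ≤ |R| ≤ k|B| + 1`, `k ≥ 1`, then the complete bipartite graph with parts
`R` and `B` has a spanning tree of maximum degree at most `k + 1`. -/
theorem statement_9 {α : Type*} [DecidableEq α] (R B : Finset α) (hdisj : Disjoint R B)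
    (k : ℕ) (hk : 1 ≤ k) (hB : 1 ≤ B.card) (hBR : B.card ≤ R.card)
    (hRk : R.card ≤ k * B.card + 1) :
    ∃ G : SimpleGraph {x : α // x ∈ R ∪ B},
      (∀ u v, G.Adj u v → ((u.1 ∈ R ∧ v.1 ∈ B) ∨ (u.1 ∈ B ∧ v.1 ∈ R))) ∧
      G.IsTree ∧ ∀ v, deg G v ≤ k + 1 := by
  let e := Equiv.Finset.union R B hdisj
  simp only [← Nat.card_eq_finsetCard] at hB hBR hRk
  obtain ⟨G, hG, htree, hdeg⟩ := (Iso.map e (completeBipartiteGraph R B)).exists_isTree_le_deg_le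
    (exists_isTree_le_completeBipartiteGraph hk hB hBR hRk)
  refine ⟨G, fun u v huv ↦ ?_, htree, hdeg⟩
  obtain ⟨-, a, b, hab, rfl, rfl⟩ := (map_adj' _ _ _ _).1 (hG huv)
  rcases a with a | a <;> rcases b with b | b <;> simp_all [e]
end
end

section
/- Let R and B be disjoint finite sets of red and blue points in the plane with R ∪ B in general position, |B| ≥ 1, and k(|B|−1) < |R| ≤ k|B| for an integer k ≥ 2; set α = |R| − k(|B|−1). Suppose b₁, b, b₂ are blue points that are consecutive in counter-clockwise order among the vertices of the convex hull of R ∪ B. Then there exist points r₁, r_α ∈ R (possibly equal) such that: (i) the points of (R ∪ B) − {b} lying in the closed angular wedge with apex b bounded by the ray from b through r₁ and the ray from b through r_α (with r₁ preceding r_α in the clockwise radial order around b starting at b₁) are exactly α points, all of them red; (ii) |R₁| = k|B₁| + 1, where R₁ (resp. B₁) is the set of points of R (resp. B − {b}) lying on the line ℓ(b, r₁) or strictly on the side of ℓ(b, r₁) containing b₁; and (iii) |R₂| = k|B₂| + 1, where R₂ (resp. B₂) is the set of points of R (resp. B − {b}) lying on the line ℓ(b, r_α) or strictly on the side of ℓ(b,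 r_α) containing b₂. -/
/-!
Order the points of `(R ∪ B) - {b}` radially around the hull vertex `b`, from `b₁` to `b₂`, and
walk along this order keeping the count `F = #red - k * #blue` of the points passed so far. `F`
starts at `0`, ends at `α ∈ [1, k]`, and moves by `+1` at a red point and by `-k` at a blue one.
After the last zero of `F` the walk never drops below `1` again (it would have to climb back to
`α` through `0`), so the next `α` points are red. They form the wedge: its first point `r₁` is
where `F = 1`, and the points from its last point `r_α` onwards have total weight
`α - (α - 1) = 1`.
-/

open scoped Classical

noncomputable section

/-- The planar cross product of two vectors. -/
def cross (u v : Pt) : ℝ := u.1 * v.2 - u.2 * v.1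

/-- Signed orientation of the triple `(p, q, x)`: positive iff `x` lies strictly to
the left of the directed line from `p` to `q`, zero iff the three points are
collinear. -/
def sgn3 (p q x : Pt) : ℝ := cross (q - p) (x - p)

/-- `[p, q]` is an edge of the convex hull of `P`, directed so that all of `P` lies
on the left of (or on) the directed line from `p` to `q`; successive such edges list
the hull vertices in counter-clockwise order. -/
def IsCCWHullEdge (P : Set Pt) (p q : Pt) : Prop :=
  p ∈ P ∧ q ∈ P ∧ p ≠ q ∧ ∀ x ∈ P, 0 ≤ sgn3 p q x

open Finset

lemma sgn3_cyclic (p q x : Pt) : sgn3 p q x = sgn3 q x p := by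
  simp only [sgn3, cross, Prod.fst_sub, Prod.snd_sub]; ring

lemma sgn3_swap (p q x : Pt) : sgn3 p x q = -sgn3 p q x := by
  simp only [sgn3, cross, Prod.fst_sub, Prod.snd_sub]; ring

lemma sgn3_self (p q : Pt) : sgn3 p q q = 0 := by
  simp only [sgn3, cross]; ring

lemma collinear_of_sgn3_eq_zero {p q x : Pt} (h : sgn3 p q x = 0) :
    Collinear ℝ ({p, q, x} : Set Pt) := by
  rcases eq_or_ne p q with rfl | hpq
  · simpa using collinear_pair ℝ p x
  have hN : 0 < (q.1 - p.1) ^ 2 + (q.2 - p.2) ^ 2 := by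
    by_contra hN
    exact hpq (Prod.ext (by nlinarith) (by nlinarith))
  -- `t` is the parameter of the orthogonal projection of `x` onto the line `pq`
  set t := ((q.1 - p.1) * (x.1 - p.1) + (q.2 - p.2) * (x.2 - p.2)) /
    ((q.1 - p.1) ^ 2 + (q.2 - p.2) ^ 2)
  have hx : AffineMap.lineMap p q t = x := by
    simp only [sgn3, cross, Prod.fst_sub, Prod.snd_sub] at h
    rw [AffineMap.lineMap_apply]
    ext
    · simp only [vsub_eq_sub, vadd_eq_add, Prod.fst_add, Prod.smul_fst, Prod.fst_sub, smul_eq_mul,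
        t]
      field_simp
      linear_combination (q.2 - p.2) * h
    · simp only [vsub_eq_sub, vadd_eq_add, Prod.snd_add, Prod.smul_snd, Prod.snd_sub, smul_eq_mul,
        t]
      field_simp
      linear_combination -(q.1 - p.1) * h
  exact collinear_triple_of_mem_affineSpan_pair (left_mem_affineSpan_pair ℝ p q)
    (right_mem_affineSpan_pair ℝ p q) (hx ▸ AffineMap.lineMap_mem_affineSpan_pair t p q)

lemma GenPos.sgn3_ne_zero {P : Set Pt} (h : GenPos P) {p q x : Pt} (hp : p ∈ P) (hq : q ∈ P)
    (hx : x ∈ P) (hpq : p ≠ q) (hpx : p ≠ x) (hqx : q ≠ x) : sgn3 p q x ≠ 0 :=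
  fun h0 => h p hp q hq x hx hpq hpx hqx (collinear_of_sgn3_eq_zero h0)

lemma IsCCWHullEdge.ne_of_consecutive {P : Set Pt} {b₁ b b₂ x : Pt} (hgp : GenPos P)
    (h₁ : IsCCWHullEdge P b₁ b) (h₂ : IsCCWHullEdge P b b₂) (hx : x ∈ P) (hxb : x ≠ b)
    (hxb₁ : x ≠ b₁) : b₁ ≠ b₂ := by
  rintro rfl
  have h1 := h₁.2.2.2 x hx
  have h2 := h₂.2.2.2 x hx
  rw [sgn3_cyclic] at h1
  rw [← neg_nonpos, ← sgn3_swap] at h2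
  exact hgp.sgn3_ne_zero h₁.2.1 hx h₁.1 hxb.symm h₁.2.2.1.symm hxb₁ (le_antisymm h2 h1)

/-- The ray from `b` through `x` meets the segment `[b₁, b₂]` at the point with parameter
`radialKey b b₁ b₂ x` (`0` at `b₁`, `1` at `b₂`). -/
def radialKey (b b₁ b₂ x : Pt) : ℝ := sgn3 b x b₁ / (sgn3 b x b₁ - sgn3 b x b₂)

lemma radialKey_le_radialKey_iff {b b₁ b₂ x y : Pt} (hD : sgn3 b b₁ b₂ < 0)
    (hx : 0 < sgn3 b x b₁ - sgn3 b x b₂) (hy : 0 < sgn3 b y b₁ - sgn3 b y b₂) :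
    radialKey b b₁ b₂ x ≤ radialKey b b₁ b₂ y ↔ sgn3 b x y ≤ 0 := by
  have plucker : sgn3 b x b₁ * (sgn3 b y b₁ - sgn3 b y b₂)
      - sgn3 b y b₁ * (sgn3 b x b₁ - sgn3 b x b₂) = -(sgn3 b b₁ b₂ * sgn3 b x y) := by
    simp only [sgn3, cross, Prod.fst_sub, Prod.snd_sub]; ring
  rw [radialKey, radialKey, div_le_div_iff₀ hx hy, ← sub_nonpos, plucker]
  constructor <;> intro h <;> nlinarith

structure IsHullCorner (P : Set Pt) (b₁ b b₂ : Pt) : Prop where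
  genPos : GenPos P
  edge₁ : IsCCWHullEdge P b₁ b
  edge₂ : IsCCWHullEdge P b b₂
  ne : b₁ ≠ b₂

namespace IsHullCorner

variable {P : Set Pt} {b₁ b b₂ r x y : Pt}

lemma sgn3_first_pos (hc : IsHullCorner P b₁ b b₂) (hx : x ∈ P \ {b}) (hxb₁ : x ≠ b₁) :
    0 < sgn3 b x b₁ :=
  (sgn3_cyclic b₁ b x ▸ hc.edge₁.2.2.2 x hx.1).lt_of_ne
    (hc.genPos.sgn3_ne_zero hc.edge₁.2.1 hx.1 hc.edge₁.1 (Ne.symm hx.2) hc.edge₁.2.2.1.symm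
      hxb₁).symm

lemma sgn3_last_nonpos (hc : IsHullCorner P b₁ b b₂) (hx : x ∈ P) : sgn3 b x b₂ ≤ 0 := by
  rw [sgn3_swap, neg_nonpos]
  exact hc.edge₂.2.2.2 x hx

lemma sgn3_last_neg (hc : IsHullCorner P b₁ b b₂) (hx : x ∈ P \ {b}) (hxb₂ : x ≠ b₂) :
    sgn3 b x b₂ < 0 :=
  (hc.sgn3_last_nonpos hx.1).lt_of_ne
    (hc.genPos.sgn3_ne_zero hc.edge₂.1 hx.1 hc.edge₂.2.1 (Ne.symm hx.2) hc.edge₂.2.2.1 hxb₂)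

lemma radialKey_denom_pos (hc : IsHullCorner P b₁ b b₂) (hx : x ∈ P \ {b}) :
    0 < sgn3 b x b₁ - sgn3 b x b₂ := by
  rcases eq_or_ne x b₁ with rfl | hxb₁
  · rw [sgn3_self, zero_sub, neg_pos]
    exact hc.sgn3_last_neg hx hc.ne
  · linarith [hc.sgn3_first_pos hx hxb₁, hc.sgn3_last_nonpos hx.1]

lemma radialKey_le_radialKey_iff (hc : IsHullCorner P b₁ b b₂) (hx : x ∈ P \ {b})
    (hy : y ∈ P \ {b}) : radialKey b b₁ b₂ x ≤ radialKey b b₁ b₂ y ↔ sgn3 b x y ≤ 0 :=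
  _root_.radialKey_le_radialKey_iff
    (hc.sgn3_last_neg ⟨hc.edge₁.1, hc.edge₁.2.2.1⟩ hc.ne)
    (hc.radialKey_denom_pos hx) (hc.radialKey_denom_pos hy)

lemma injOn_radialKey (hc : IsHullCorner P b₁ b b₂) :
    Set.InjOn (radialKey b b₁ b₂) (P \ {b}) := by
  intro x hx y hy hxy
  by_contra hne
  have hxy' := (hc.radialKey_le_radialKey_iff hx hy).1 hxy.le
  have hyx := (hc.radialKey_le_radialKey_iff hy hx).1 hxy.ge
  rw [sgn3_swap, neg_nonpos] at hyx
  exact hc.genPos.sgn3_ne_zero hc.edge₁.2.1 hx.1 hy.1 (Ne.symm hx.2) (Ne.symm hy.2) hne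
    (le_antisymm hxy' hyx)

lemma sgn3_mul_sgn3_first_nonpos_iff (hc : IsHullCorner P b₁ b b₂) (hr : r ∈ P \ {b})
    (hrb₁ : r ≠ b₁) (hx : x ∈ P \ {b}) :
    sgn3 b r x * sgn3 b r b₁ ≤ 0 ↔ radialKey b b₁ b₂ r ≤ radialKey b b₁ b₂ x := by
  have := hc.sgn3_first_pos hr hrb₁
  rw [hc.radialKey_le_radialKey_iff hr hx]
  constructor <;> intro h <;> nlinarith

lemma sgn3_mul_sgn3_first_nonneg_iff (hc : IsHullCorner P b₁ b b₂) (hr : r ∈ P \ {b})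
    (hrb₁ : r ≠ b₁) (hx : x ∈ P \ {b}) :
    0 ≤ sgn3 b r x * sgn3 b r b₁ ↔ radialKey b b₁ b₂ x ≤ radialKey b b₁ b₂ r := by
  have := hc.sgn3_first_pos hr hrb₁
  rw [hc.radialKey_le_radialKey_iff hx hr, sgn3_swap]
  constructor <;> intro h <;> nlinarith

lemma sgn3_mul_sgn3_last_nonpos_iff (hc : IsHullCorner P b₁ b b₂) (hr : r ∈ P \ {b})
    (hrb₂ : r ≠ b₂) (hx : x ∈ P \ {b}) :
    sgn3 b r x * sgn3 b r b₂ ≤ 0 ↔ radialKey b b₁ b₂ x ≤ radialKey b b₁ b₂ r := by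
  have := hc.sgn3_last_neg hr hrb₂
  rw [hc.radialKey_le_radialKey_iff hx hr, sgn3_swap]
  constructor <;> intro h <;> nlinarith

lemma sgn3_mul_sgn3_last_nonneg_iff (hc : IsHullCorner P b₁ b b₂) (hr : r ∈ P \ {b})
    (hrb₂ : r ≠ b₂) (hx : x ∈ P \ {b}) :
    0 ≤ sgn3 b r x * sgn3 b r b₂ ↔ radialKey b b₁ b₂ r ≤ radialKey b b₁ b₂ x := by
  have := hc.sgn3_last_neg hr hrb₂
  rw [hc.radialKey_le_radialKey_iff hr hx]
  constructor <;> intro h <;> nlinarith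

end IsHullCorner

lemma exists_run_after_last_zero {F : ℕ → ℤ} {n k α : ℕ} (hα : 1 ≤ α) (hαk : α ≤ k)
    (h0 : F 0 = 0) (hn : F n = α)
    (hstep : ∀ m < n, F (m + 1) = F m + 1 ∨ F (m + 1) = F m - k) :
    ∃ m₀, m₀ + α ≤ n ∧ ∀ s ≤ α, F (m₀ + s) = s := by
  set m₀ := Nat.findGreatest (fun m => F m = 0) n
  have hm₀ : F m₀ = 0 := Nat.findGreatest_spec (P := fun m => F m = 0) (Nat.zero_le n) h0
  -- walking back from `F n = α > 0` with steps `-1` or `+k`, `F` can only drop below `1` at a zero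
  have hpos : ∀ d t, t + d = n → m₀ < t → 0 < F t := by
    intro d
    induction d with
    | zero => intro t ht _; rw [show t = n by omega, hn]; omega
    | succ d ih =>
      intro t ht hlt
      have hnext := ih (t + 1) (by omega) (by omega)
      have hne : F t ≠ 0 := Nat.findGreatest_is_greatest hlt (by omega)
      rcases hstep t (by omega) with h | h <;> omega
  suffices ∀ s ≤ α, m₀ + s ≤ n ∧ F (m₀ + s) = s from
    ⟨m₀, (this α le_rfl).1, fun s hs => (this s hs).2⟩
  intro s
  induction s with
  | zero => exact fun _ => ⟨Nat.findGreatest_le n, by simpa using hm₀⟩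
  | succ s ih =>
    intro hs
    rw [← add_assoc]
    obtain ⟨hsn, hFs⟩ := ih (by omega)
    have hlt : m₀ + s < n := lt_of_le_of_ne hsn fun h => by rw [h, hn] at hFs; omega
    have hpos' := hpos (n - (m₀ + s + 1)) (m₀ + s + 1) (by omega) (by omega)
    rcases hstep (m₀ + s) hlt with h | h <;> push_cast <;> omega

section KeyRank

variable {ι β M : Type*} [LinearOrder β] [AddCommMonoid M] {S : Finset ι} {θ : ι → β}
  {f : ι → M} {x y : ι}

def keyRank (S : Finset ι) (θ : ι → β) (x : ι) : ℕ := #{y ∈ S | θ y ≤ θ x}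

lemma keyRank_le_keyRank_iff (hx : x ∈ S) : keyRank S θ x ≤ keyRank S θ y ↔ θ x ≤ θ y := by
  refine ⟨fun h => ?_, fun h => card_le_card fun z hz => ?_⟩
  · by_contra! hyx
    refine (card_lt_card ⟨fun z hz => ?_, fun hsub => ?_⟩).not_ge h
    · simp only [mem_filter] at hz ⊢; exact ⟨hz.1, hz.2.trans hyx.le⟩
    · simpa [hyx.not_ge] using hsub (mem_filter.2 ⟨hx, le_rfl⟩)
  · simp only [mem_filter] at hz ⊢; exact ⟨hz.1, hz.2.trans h⟩

lemma keyRank_mem_Icc (hx : x ∈ S) : keyRank S θ x ∈ Icc 1 #S :=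
  mem_Icc.2 ⟨card_pos.2 ⟨x, mem_filter.2 ⟨hx, le_rfl⟩⟩, card_filter_le _ _⟩

lemma injOn_keyRank (hinj : Set.InjOn θ S) : Set.InjOn (keyRank S θ) S := fun _ hx _ hy h =>
  hinj hx hy <|
    le_antisymm ((keyRank_le_keyRank_iff hx).1 h.le) ((keyRank_le_keyRank_iff hy).1 h.ge)

lemma image_keyRank (hinj : Set.InjOn θ S) : S.image (keyRank S θ) = Icc 1 #S := by
  refine eq_of_subset_of_card_le (fun m hm => ?_) ?_
  · obtain ⟨x, hx, rfl⟩ := mem_image.1 hm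
    exact keyRank_mem_Icc hx
  · rw [card_image_of_injOn (injOn_keyRank hinj), Nat.card_Icc, Nat.add_sub_cancel]

lemma exists_keyRank_eq (hinj : Set.InjOn θ S) {m : ℕ} (hm : m ∈ Icc 1 #S) :
    ∃ x ∈ S, keyRank S θ x = m :=
  mem_image.1 <| (image_keyRank hinj).symm ▸ hm

lemma card_filter_keyRank_mem (hinj : Set.InjOn θ S) {I : Finset ℕ} (hI : I ⊆ Icc 1 #S) :
    #{x ∈ S | keyRank S θ x ∈ I} = #I := by
  rw [← card_image_of_injOn ((injOn_keyRank hinj).mono (filter_subset _ S)),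
    ← filter_image (p := (· ∈ I)), image_keyRank hinj, filter_mem_eq_inter, inter_eq_right.2 hI]

def prefixSum (S : Finset ι) (θ : ι → β) (f : ι → M) (m : ℕ) : M :=
  ∑ x ∈ S with keyRank S θ x ≤ m, f x

lemma prefixSum_zero : prefixSum S θ f 0 = 0 :=
  sum_eq_zero fun x hx => by
    have := (mem_Icc.1 (keyRank_mem_Icc (θ := θ) (mem_filter.1 hx).1)).1
    have := (mem_filter.1 hx).2
    omega

lemma prefixSum_card : prefixSum S θ f #S = ∑ x ∈ S, f x :=
  congrArg (∑ x ∈ ·, f x) (filter_true_of_mem fun _ hx => (mem_Icc.1 (keyRank_mem_Icc hx)).2)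

lemma prefixSum_keyRank [DecidableEq ι] (hinj : Set.InjOn θ S) (hx : x ∈ S) :
    prefixSum S θ f (keyRank S θ x) = prefixSum S θ f (keyRank S θ x - 1) + f x := by
  have hpos := (mem_Icc.1 (keyRank_mem_Icc (θ := θ) hx)).1
  have hsplit : {y ∈ S | keyRank S θ y ≤ keyRank S θ x} =
      insert x {y ∈ S | keyRank S θ y ≤ keyRank S θ x - 1} := by
    ext y
    simp only [mem_filter, mem_insert]
    constructor
    · rintro ⟨hy, hyx⟩
      rcases hyx.lt_or_eq with hyx | hyx
      · exact Or.inr ⟨hy, by omega⟩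
      · exact Or.inl (injOn_keyRank hinj hy hx hyx)
    · rintro (rfl | ⟨hy, hyx⟩)
      · exact ⟨hx, le_rfl⟩
      · exact ⟨hy, by omega⟩
  rw [prefixSum, hsplit, sum_insert (by simp; omega), add_comm, prefixSum]

lemma sum_filter_le_key_eq_prefixSum (x : ι) :
    ∑ y ∈ S with θ y ≤ θ x, f y = prefixSum S θ f (keyRank S θ x) :=
  congrArg (∑ y ∈ ·, f y) (filter_congr fun _ hy => (keyRank_le_keyRank_iff hy).symm)

lemma sum_filter_key_le_add_prefixSum (hx : x ∈ S) :
    ∑ y ∈ S with θ x ≤ θ y, f y + prefixSum S θ f (keyRank S θ x - 1) = ∑ y ∈ S, f y := by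
  have hpos := (mem_Icc.1 (keyRank_mem_Icc (θ := θ) hx)).1
  rw [prefixSum, ← sum_filter_add_sum_filter_not S (fun y => θ x ≤ θ y)]
  congr 2
  exact filter_congr fun y _ => by rw [← keyRank_le_keyRank_iff hx]; omega

end KeyRank

section RedRun

variable {ι β : Type*} [LinearOrder β] [DecidableEq ι] {S R : Finset ι} {θ : ι → β} {k α : ℕ}

def redBlueWeight (R : Finset ι) (k : ℕ) (x : ι) : ℤ := if x ∈ R then 1 else -k

lemma sum_filter_redBlueWeight (hRS : R ⊆ S) (p : ι → Prop) [DecidablePred p] :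
    ∑ x ∈ S with p x, redBlueWeight R k x = #{x ∈ R | p x} - k * #{x ∈ S \ R | p x} := by
  have hR : {x ∈ S | p x ∧ x ∈ R} = {x ∈ R | p x} := by
    ext x; simp only [mem_filter]; exact ⟨fun h => ⟨h.2.2, h.2.1⟩, fun h => ⟨hRS h.1, h.2, h.1⟩⟩
  have hB : {x ∈ S | p x ∧ x ∉ R} = {x ∈ S \ R | p x} := by
    ext x; simp only [mem_filter, mem_sdiff]; tauto
  unfold redBlueWeight
  rw [sum_ite, filter_filter, filter_filter, hR, hB, sum_const, sum_const,
    nsmul_one, nsmul_eq_mul, mul_neg, sub_eq_add_neg, mul_comm]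

lemma exists_keyRank_run (hinj : Set.InjOn θ S) (hα : 1 ≤ α) (hαk : α ≤ k)
    (htotal : ∑ x ∈ S, redBlueWeight R k x = α) :
    ∃ m₀, m₀ + α ≤ #S ∧ (∀ s ≤ α, prefixSum S θ (redBlueWeight R k) (m₀ + s) = s) ∧
      ∀ x ∈ S, keyRank S θ x ∈ Ioc m₀ (m₀ + α) → x ∈ R := by
  obtain ⟨m₀, hm₀n, hrun⟩ := exists_run_after_last_zero hα hαk (prefixSum_zero (θ := θ))
    (prefixSum_card.trans htotal) fun m hm => by
      obtain ⟨x, hx, hxm⟩ := exists_keyRank_eq hinj (m := m + 1) (mem_Icc.2 ⟨by omega, hm⟩)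
      rw [← hxm, prefixSum_keyRank hinj hx, hxm, Nat.add_sub_cancel, redBlueWeight]
      split_ifs
      exacts [.inl rfl, .inr (sub_eq_add_neg _ _).symm]
  refine ⟨m₀, hm₀n, hrun, fun x hx hxI => ?_⟩
  rw [mem_Ioc] at hxI
  have hstep := prefixSum_keyRank (f := redBlueWeight R k) hinj hx
  rw [show keyRank S θ x = m₀ + (keyRank S θ x - m₀) by omega, hrun _ (by omega),
    show m₀ + (keyRank S θ x - m₀) - 1 = m₀ + (keyRank S θ x - m₀ - 1) by omega,
    hrun _ (by omega), redBlueWeight] at hstep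
  by_contra hxR
  rw [if_neg hxR] at hstep
  omega

theorem exists_red_run (hinj : Set.InjOn θ S) (hRS : R ⊆ S) (hα : 1 ≤ α) (hαk : α ≤ k)
    (hcard : (#R : ℤ) = k * #(S \ R) + α) :
    ∃ r₁ ∈ R, ∃ rα ∈ R, θ r₁ ≤ θ rα ∧
      #{x ∈ S | θ r₁ ≤ θ x ∧ θ x ≤ θ rα} = α ∧ {x ∈ S | θ r₁ ≤ θ x ∧ θ x ≤ θ rα} ⊆ R ∧
      #{x ∈ R | θ x ≤ θ r₁} = k * #{x ∈ S \ R | θ x ≤ θ r₁} + 1 ∧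
      #{x ∈ R | θ rα ≤ θ x} = k * #{x ∈ S \ R | θ rα ≤ θ x} + 1 := by
  have htotal : ∑ x ∈ S, redBlueWeight R k x = α := by
    have := sum_filter_redBlueWeight (k := k) hRS fun _ => True
    rw [filter_true, filter_true, filter_true, hcard] at this
    rw [this]; ring
  obtain ⟨m₀, hm₀n, hrun, hred⟩ := exists_keyRank_run hinj hα hαk htotal
  obtain ⟨r₁, hr₁S, hρr₁⟩ := exists_keyRank_eq hinj (m := m₀ + 1) (mem_Icc.2 ⟨by omega, by omega⟩)
  obtain ⟨rα, hrαS, hρrα⟩ := exists_keyRank_eq hinj (m := m₀ + α) (mem_Icc.2 ⟨by omega, hm₀n⟩)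
  have hwedge : {x ∈ S | θ r₁ ≤ θ x ∧ θ x ≤ θ rα} = {x ∈ S | keyRank S θ x ∈ Ioc m₀ (m₀ + α)} :=
    filter_congr fun x hx => by
      rw [← keyRank_le_keyRank_iff hr₁S, ← keyRank_le_keyRank_iff hx, mem_Ioc, hρr₁, hρrα]; omega
  have hIoc : Ioc m₀ (m₀ + α) ⊆ Icc 1 #S := fun m hm => by
    rw [mem_Ioc] at hm; rw [mem_Icc]; omega
  refine ⟨r₁, hred r₁ hr₁S (by rw [hρr₁, mem_Ioc]; omega), rα,
    hred rα hrαS (by rw [hρrα, mem_Ioc]; omega),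
    (keyRank_le_keyRank_iff hr₁S).1 (by omega), ?_, ?_, ?_, ?_⟩
  · rw [hwedge, card_filter_keyRank_mem hinj hIoc, Nat.card_Ioc, Nat.add_sub_cancel_left]
  · rw [hwedge]
    exact fun x hx => hred x (mem_filter.1 hx).1 (mem_filter.1 hx).2
  · have h := sum_filter_redBlueWeight (k := k) hRS fun x => θ x ≤ θ r₁
    rw [sum_filter_le_key_eq_prefixSum, hρr₁, hrun 1 hα] at h
    have hz : (#{x ∈ R | θ x ≤ θ r₁} : ℤ) = k * #{x ∈ S \ R | θ x ≤ θ r₁} + 1 := by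
      push_cast at h; linarith
    exact_mod_cast hz
  · have h := sum_filter_redBlueWeight (k := k) hRS fun x => θ rα ≤ θ x
    have hsplit := sum_filter_key_le_add_prefixSum (θ := θ) (f := redBlueWeight R k) hrαS
    rw [hρrα, Nat.add_sub_assoc hα, hrun _ (Nat.sub_le α 1), htotal, h] at hsplit
    have hz : (#{x ∈ R | θ rα ≤ θ x} : ℤ) = k * #{x ∈ S \ R | θ rα ≤ θ x} + 1 := by
      push_cast [Nat.cast_sub hα] at hsplit; linarith
    exact_mod_cast hz

end RedRun

theorem IsHullCorner.exists_red_wedge {R B : Finset Pt} {b₁ b b₂ : Pt} {k α : ℕ}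
    (hc : IsHullCorner ↑(R ∪ B) b₁ b b₂) (hdisj : Disjoint R B) (hb₁ : b₁ ∈ B) (hb : b ∈ B)
    (hb₂ : b₂ ∈ B) (hα : 1 ≤ α) (hαk : α ≤ k) (hcard : #R = k * #(B.erase b) + α) :
    ∃ r₁ rα : Pt, r₁ ∈ R ∧ rα ∈ R ∧
      sgn3 b rα r₁ * sgn3 b rα b₂ ≤ 0 ∧
      sgn3 b r₁ rα * sgn3 b r₁ b₁ ≤ 0 ∧
      #{x ∈ (R ∪ B).erase b | sgn3 b r₁ x * sgn3 b r₁ b₁ ≤ 0 ∧ sgn3 b rα x * sgn3 b rα b₂ ≤ 0}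
        = α ∧
      {x ∈ (R ∪ B).erase b | sgn3 b r₁ x * sgn3 b r₁ b₁ ≤ 0 ∧ sgn3 b rα x * sgn3 b rα b₂ ≤ 0}
        ⊆ R ∧
      #{x ∈ R | 0 ≤ sgn3 b r₁ x * sgn3 b r₁ b₁}
        = k * #{x ∈ B.erase b | 0 ≤ sgn3 b r₁ x * sgn3 b r₁ b₁} + 1 ∧
      #{x ∈ R | 0 ≤ sgn3 b rα x * sgn3 b rα b₂}
        = k * #{x ∈ B.erase b | 0 ≤ sgn3 b rα x * sgn3 b rα b₂} + 1 := by
  have hbR : b ∉ R := fun h => disjoint_left.1 hdisj h hb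
  have hRS : R ⊆ (R ∪ B).erase b :=
    fun x hx => mem_erase.2 ⟨fun h => hbR (h ▸ hx), mem_union_left B hx⟩
  have hBS : B.erase b ⊆ (R ∪ B).erase b := erase_subset_erase b subset_union_right
  have hSR : (R ∪ B).erase b \ R = B.erase b := by
    ext x
    simp only [mem_sdiff, mem_erase, mem_union]
    have := @disjoint_left.1 hdisj x
    tauto
  have hS : ∀ x ∈ (R ∪ B).erase b, x ∈ (↑(R ∪ B) : Set Pt) \ {b} := fun x hx => by
    rw [← coe_erase]; exact hx
  obtain ⟨r₁, hr₁, rα, hrα, hr₁rα, hwedge, hwedgeR, hleft, hright⟩ :=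
    exists_red_run (θ := radialKey b b₁ b₂) (by rw [coe_erase]; exact hc.injOn_radialKey) hRS
      hα hαk (by rw [hSR]; exact_mod_cast hcard)
  rw [hSR] at hleft hright
  have hr₁b₁ : r₁ ≠ b₁ := fun h => disjoint_left.1 hdisj (h ▸ hr₁) hb₁
  have hrαb₂ : rα ≠ b₂ := fun h => disjoint_left.1 hdisj (h ▸ hrα) hb₂
  have hr₁S := hS r₁ (hRS hr₁)
  have hrαS := hS rα (hRS hrα)
  have hW : {x ∈ (R ∪ B).erase b | sgn3 b r₁ x * sgn3 b r₁ b₁ ≤ 0 ∧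
        sgn3 b rα x * sgn3 b rα b₂ ≤ 0} =
      {x ∈ (R ∪ B).erase b | radialKey b b₁ b₂ r₁ ≤ radialKey b b₁ b₂ x ∧
        radialKey b b₁ b₂ x ≤ radialKey b b₁ b₂ rα} :=
    filter_congr fun x hx => and_congr (hc.sgn3_mul_sgn3_first_nonpos_iff hr₁S hr₁b₁ (hS x hx))
      (hc.sgn3_mul_sgn3_last_nonpos_iff hrαS hrαb₂ (hS x hx))
  refine ⟨r₁, rα, hr₁, hrα, (hc.sgn3_mul_sgn3_last_nonpos_iff hrαS hrαb₂ hr₁S).2 hr₁rα,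
    (hc.sgn3_mul_sgn3_first_nonpos_iff hr₁S hr₁b₁ hrαS).2 hr₁rα, hW ▸ hwedge, hW ▸ hwedgeR, ?_, ?_⟩
  · rwa [filter_congr fun x hx => hc.sgn3_mul_sgn3_first_nonneg_iff hr₁S hr₁b₁ (hS x (hRS hx)),
      filter_congr fun x hx => hc.sgn3_mul_sgn3_first_nonneg_iff hr₁S hr₁b₁ (hS x (hBS hx))]
  · rwa [filter_congr fun x hx => hc.sgn3_mul_sgn3_last_nonneg_iff hrαS hrαb₂ (hS x (hRS hx)),
      filter_congr fun x hx => hc.sgn3_mul_sgn3_last_nonneg_iff hrαS hrαb₂ (hS x (hBS hx))]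

theorem statement_12_general (R B : Finset Pt) (hdisj : Disjoint R B)
    (hgp : GenPos (↑(R ∪ B) : Set Pt)) (k : ℕ) (hB : 1 ≤ B.card)
    (hlo : k * (B.card - 1) < R.card) (hhi : R.card ≤ k * B.card)
    (α : ℕ) (hα : α = R.card - k * (B.card - 1))
    (b₁ b b₂ : Pt) (hb₁ : b₁ ∈ B) (hb : b ∈ B) (hb₂ : b₂ ∈ B)
    (hedge₁ : IsCCWHullEdge (↑(R ∪ B) : Set Pt) b₁ b)
    (hedge₂ : IsCCWHullEdge (↑(R ∪ B) : Set Pt) b b₂) :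
    ∃ r₁ rα : Pt, r₁ ∈ R ∧ rα ∈ R ∧
      -- `r₁` lies in the wedge (weakly before `r_α`) and vice versa:
      sgn3 b rα r₁ * sgn3 b rα b₂ ≤ 0 ∧
      sgn3 b r₁ rα * sgn3 b r₁ b₁ ≤ 0 ∧
      -- (i) exactly `α` points of `(R ∪ B) \ {b}` lie in the closed wedge, all red:
      (((R ∪ B).erase b).filter (fun x =>
          sgn3 b r₁ x * sgn3 b r₁ b₁ ≤ 0 ∧ sgn3 b rα x * sgn3 b rα b₂ ≤ 0)).card = α ∧
      ((R ∪ B).erase b).filter (fun x =>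
          sgn3 b r₁ x * sgn3 b r₁ b₁ ≤ 0 ∧ sgn3 b rα x * sgn3 b rα b₂ ≤ 0) ⊆ R ∧
      -- (ii) |R₁| = k |B₁| + 1:
      (R.filter (fun x => 0 ≤ sgn3 b r₁ x * sgn3 b r₁ b₁)).card
        = k * ((B.erase b).filter (fun x => 0 ≤ sgn3 b r₁ x * sgn3 b r₁ b₁)).card + 1 ∧
      -- (iii) |R₂| = k |B₂| + 1:
      (R.filter (fun x => 0 ≤ sgn3 b rα x * sgn3 b rα b₂)).card
        = k * ((B.erase b).filter (fun x => 0 ≤ sgn3 b rα x * sgn3 b rα b₂)).card + 1 := by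
  obtain ⟨r, hr⟩ : R.Nonempty := card_pos.1 (by omega)
  have hc : IsHullCorner ↑(R ∪ B) b₁ b b₂ := ⟨hgp, hedge₁, hedge₂,
    hedge₁.ne_of_consecutive hgp hedge₂ (mem_coe.2 (mem_union_left B hr))
      (fun h => disjoint_left.1 hdisj (h ▸ hr) hb) (fun h => disjoint_left.1 hdisj (h ▸ hr) hb₁)⟩
  have hαk : α ≤ k := by
    rw [hα, tsub_le_iff_right, add_comm, ← Nat.mul_succ, Nat.succ_eq_add_one,
      Nat.sub_add_cancel hB]
    exact hhi
  refine hc.exists_red_wedge hdisj hb₁ hb hb₂ (by omega) hαk ?_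
  rw [card_erase_of_mem hb, hα]
  exact (Nat.add_sub_cancel' hlo.le).symm

/-- Lemma on three consecutive blue hull points.
Let `k(|B|-1) < |R| ≤ k|B|`, `k ≥ 2`, `|B| ≥ 1`, `α = |R| - k(|B|-1)`, and let
`b₁, b, b₂` be blue points consecutive in counter-clockwise order on the convex hull
of `R ∪ B`. Then there are red points `r₁, r_α` (possibly equal), with `r₁` preceding
`r_α` in the clockwise radial order around `b` starting at `b₁`, such that:
(i) the closed angular wedge at `b` between the rays `b→r₁` and `b→r_α` contains
exactly `α` points of `(R ∪ B) \ {b}`, all of them red;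
(ii) `|R₁| = k|B₁| + 1` for the points on `ℓ(b,r₁)` or strictly on its `b₁`-side;
(iii) `|R₂| = k|B₂| + 1` for the points on `ℓ(b,r_α)` or strictly on its `b₂`-side. -/
theorem statement_12 (R B : Finset Pt) (hdisj : Disjoint R B)
    (hgp : GenPos (↑(R ∪ B) : Set Pt)) (k : ℕ) (hk : 2 ≤ k) (hB : 1 ≤ B.card)
    (hlo : k * (B.card - 1) < R.card) (hhi : R.card ≤ k * B.card)
    (α : ℕ) (hα : α = R.card - k * (B.card - 1))
    (b₁ b b₂ : Pt) (hb₁ : b₁ ∈ B) (hb : b ∈ B) (hb₂ : b₂ ∈ B)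
    (hedge₁ : IsCCWHullEdge (↑(R ∪ B) : Set Pt) b₁ b)
    (hedge₂ : IsCCWHullEdge (↑(R ∪ B) : Set Pt) b b₂) :
    ∃ r₁ rα : Pt, r₁ ∈ R ∧ rα ∈ R ∧
      -- `r₁` lies in the wedge (weakly before `r_α`) and vice versa:
      sgn3 b rα r₁ * sgn3 b rα b₂ ≤ 0 ∧
      sgn3 b r₁ rα * sgn3 b r₁ b₁ ≤ 0 ∧
      -- (i) exactly `α` points of `(R ∪ B) \ {b}` lie in the closed wedge, all red:
      (((R ∪ B).erase b).filter (fun x =>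
          sgn3 b r₁ x * sgn3 b r₁ b₁ ≤ 0 ∧ sgn3 b rα x * sgn3 b rα b₂ ≤ 0)).card = α ∧
      ((R ∪ B).erase b).filter (fun x =>
          sgn3 b r₁ x * sgn3 b r₁ b₁ ≤ 0 ∧ sgn3 b rα x * sgn3 b rα b₂ ≤ 0) ⊆ R ∧
      -- (ii) |R₁| = k |B₁| + 1:
      (R.filter (fun x => 0 ≤ sgn3 b r₁ x * sgn3 b r₁ b₁)).card
        = k * ((B.erase b).filter (fun x => 0 ≤ sgn3 b r₁ x * sgn3 b r₁ b₁)).card + 1 ∧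
      -- (iii) |R₂| = k |B₂| + 1:
      (R.filter (fun x => 0 ≤ sgn3 b rα x * sgn3 b rα b₂)).card
        = k * ((B.erase b).filter (fun x => 0 ≤ sgn3 b rα x * sgn3 b rα b₂)).card + 1 :=
  statement_12_general R B hdisj hgp k hB hlo hhi α hα b₁ b b₂ hb₁ hb hb₂ hedge₁ hedge₂
end
end
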